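/- Let R : ℝ² → ℝ² be the rotation by π/4 about the origin, R(x,y) = ((x − y)/√2, (x + y)/√2), and let Λ = {(a,b) ∈ ℝ² : a ∈ ℤ and b ∈ ℤ}. For every vector t ∈ ℝ², the set (t + R(Λ)) ∩ Λ contains at most one point. That is, any lattice obtained from ℤ² by a rotation of π/4 followed by a translation meets ℤ² in at most one point. -/

import Mathlib

/-- The integer lattice ℤ² inside ℝ². -/
def intLattice : Set (ℝ × ℝ) := {p | ∃ a b : ℤ, p = ((a : ℝ), (b : ℝ))}

/-- Rotation of the plane by π/4 about the origin. -/
noncomputable def rot45 : ℝ × ℝ → ℝ × ℝ :=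
  fun p => ((p.1 - p.2) / Real.sqrt 2, (p.1 + p.2) / Real.sqrt 2)

lemma int_eq_int_mul_sqrt_two (m u : ℤ) (h : (m : ℝ) = (u : ℝ) * Real.sqrt 2) :
    m = 0 ∧ u = 0 := by
  have hu : u = 0 := by
    by_contra hu
    have hu' : (u : ℝ) ≠ 0 := Int.cast_ne_zero.mpr hu
    have : ((m / u : ℚ) : ℝ) = Real.sqrt 2 := by
      push_cast
      field_simp
      linarith [h]
    exact irrational_sqrt_two ⟨_, this⟩
  subst hu
  simp at h
  exact ⟨h, rfl⟩

/-- Any lattice obtained from ℤ² by a rotation of π/4 followed by a translation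
meets ℤ² in at most one point. -/
theorem rotated_translated_lattice_meets_in_at_most_one_point (t : ℝ × ℝ) :
    Set.Subsingleton ((fun q => t + q) '' (rot45 '' intLattice) ∩ intLattice) := by
  rintro x ⟨⟨_, ⟨_, ⟨a, b, rfl⟩, rfl⟩, rfl⟩, p, q, hx⟩
    y ⟨⟨_, ⟨_, ⟨c, d, rfl⟩, rfl⟩, rfl⟩, r, s, hy⟩
  have s2 : Real.sqrt 2 ≠ 0 := by positivity
  have hx1 := congrArg Prod.fst hx
  have hx2 := congrArg Prod.snd hx
  have hy1 := congrArg Prod.fst hy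
  have hy2 := congrArg Prod.snd hy
  simp only [rot45, Prod.fst_add, Prod.snd_add] at hx1 hx2 hy1 hy2
  -- differences
  have h1 : ((a - c : ℤ) : ℝ) - ((b - d : ℤ) : ℝ) = ((p - r : ℤ) : ℝ) * Real.sqrt 2 := by
    push_cast
    field_simp at hx1 hy1 ⊢
    nlinarith [hx1, hy1]
  have h2 : ((a - c : ℤ) : ℝ) + ((b - d : ℤ) : ℝ) = ((q - s : ℤ) : ℝ) * Real.sqrt 2 := by
    push_cast
    field_simp at hx2 hy2 ⊢
    nlinarith [hx2, hy2]
  have hsum : ((2 * (a - c) : ℤ) : ℝ) = ((p - r + (q - s) : ℤ) : ℝ) * Real.sqrt 2 := by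
    push_cast at h1 h2 ⊢; linarith
  have hdiff : ((2 * (b - d) : ℤ) : ℝ) = ((q - s - (p - r) : ℤ) : ℝ) * Real.sqrt 2 := by
    push_cast at h1 h2 ⊢; linarith
  obtain ⟨e1, e2⟩ := int_eq_int_mul_sqrt_two _ _ hsum
  obtain ⟨e3, e4⟩ := int_eq_int_mul_sqrt_two _ _ hdiff
  have hp : p = r := by omega
  have hq : q = s := by omega
  rw [hx, hy, hp, hq]
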